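/- Let (A,B) be an m×n bimatrix game such that P and Q are bounded. Then (A,B) is nondegenerate if and only if the following two conditions hold: (i) P and Q are simple polytopes, i.e. no point of P lies on more than m facets of P and no point of Q lies on more than n facets of Q; and (ii) every redundant inequality among the defining inequalities of P (the inequalities x_i ≥ 0 and (Bᵀx)_j ≤ 1) is binding at no point of P, and likewise every redundant inequality among the defining inequalities of Q (the inequalities (Ay)_i ≤ 1 and y_j ≥ 0) is binding at no point of Q. -/

import Mathlib

open Matrix
open scoped Classical

noncomputable section

def IsMixed {ι : Type*} [Fintype ι] (x : ι → ℝ) : Prop :=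
  (∀ i, 0 ≤ x i) ∧ ∑ i, x i = 1

def supp {ι : Type*} [Fintype ι] (x : ι → ℝ) : Finset ι :=
  Finset.univ.filter fun i => 0 < x i

def bestresp1 {ι κ : Type*} [Fintype ι] [Fintype κ] (A : Matrix ι κ ℝ) (y : κ → ℝ) :
    Finset ι :=
  Finset.univ.filter fun i => ∀ k, (A *ᵥ y) k ≤ (A *ᵥ y) i

def bestresp2 {ι κ : Type*} [Fintype ι] [Fintype κ] (B : Matrix ι κ ℝ) (x : ι → ℝ) :
    Finset κ :=
  Finset.univ.filter fun j => ∀ k, (Bᵀ *ᵥ x) k ≤ (Bᵀ *ᵥ x) j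

def Nondegenerate {ι κ : Type*} [Fintype ι] [Fintype κ] (A B : Matrix ι κ ℝ) : Prop :=
  (∀ x : ι → ℝ, IsMixed x → (bestresp2 B x).card ≤ (supp x).card) ∧
  (∀ y : κ → ℝ, IsMixed y → (bestresp1 A y).card ≤ (supp y).card)

def Pset {m n : ℕ} (B : Matrix (Fin m) (Fin n) ℝ) : Set (Fin m → ℝ) :=
  {x | (∀ i, 0 ≤ x i) ∧ ∀ j, (Bᵀ *ᵥ x) j ≤ 1}

def Qset {m n : ℕ} (A : Matrix (Fin m) (Fin n) ℝ) : Set (Fin n → ℝ) :=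
  {y | (∀ i, (A *ᵥ y) i ≤ 1) ∧ ∀ j, 0 ≤ y j}

/-- Affine dimension of a subset of `ℝ^ι`, with the empty set having dimension `-1`. -/
def affDim {ι : Type*} [Fintype ι] (s : Set (ι → ℝ)) : ℤ :=
  if s = ∅ then -1 else Module.finrank ℝ (affineSpan ℝ s).direction

/-- `F` is a face of `P'`: `F = {z ∈ P' | cᵀz = q₀}` for a valid inequality
`cᵀz ≤ q₀` of `P'`. -/
def IsFace {ι : Type*} [Fintype ι] (P' F : Set (ι → ℝ)) : Prop :=
  ∃ (c : ι → ℝ) (q₀ : ℝ), (∀ z ∈ P', c ⬝ᵥ z ≤ q₀) ∧ F = {z ∈ P' | c ⬝ᵥ z = q₀}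

/-- `F` is a facet of the (full-dimensional) polytope `P' ⊆ ℝ^ι`: a face of affine
dimension `|ι| - 1`. -/
def IsFacet {ι : Type*} [Fintype ι] (P' F : Set (ι → ℝ)) : Prop :=
  IsFace P' F ∧ affDim F = (Fintype.card ι : ℤ) - 1

/-- `P'` is a simple polytope in `ℝ^ι`: no point of `P'` lies on more than `|ι|`
facets of `P'`, i.e. there is no point lying on `|ι| + 1` pairwise distinct facets. -/
def IsSimple {ι : Type*} [Fintype ι] (P' : Set (ι → ℝ)) : Prop :=
  ∀ x ∈ P', ¬ ∃ F : Fin (Fintype.card ι + 1) → Set (ι → ℝ),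
    Function.Injective F ∧ ∀ k, IsFacet P' (F k) ∧ x ∈ F k

/-!
Both `P` and `Q` are polytopes `{x | g k ⬝ᵥ x ≤ b k}` with a strictly feasible point (a small
positive multiple of `𝟙`), and nondegeneracy says that no point of `P` or `Q` satisfies more than
`dim` of the defining inequalities with equality: a mixed strategy, rescaled so that its best
payoff is `1`, is a point of `P` whose tight inequalities are its zero coordinates and its best
responses (boundedness of `P` rules out a nonpositive best payoff).

For such a polytope, "at most `dim` tight inequalities at every point" is equivalent to
simplicity together with the condition on redundant inequalities. Every facet is the set where a
single irredundant inequality is tight, and distinct irredundant inequalities give distinct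
facets, so if no redundant inequality is ever tight, the tight inequalities at a point are in
bijection with the facets through it. If a redundant inequality `k` is tight somewhere, take an
extreme point `v` of the face where `k` is tight: redundancy of `k` lets `v` move both ways along
any direction on which the other tight inequalities vanish, so these already have rank `dim`, and
together with `k` there are more than `dim` of them.
-/

open Filter Topology

section Polyhedron

lemma exists_pos_add_smul_mem {V : Type*} [AddCommGroup V] [Module ℝ V] {s : Set V} {x u : V}
    (h : ∀ᶠ ε in 𝓝[>] (0 : ℝ), x + ε • u ∈ s) : ∃ ε : ℝ, 0 < ε ∧ x + ε • u ∈ s :=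
  let ⟨ε, hs, hε⟩ := (h.and self_mem_nhdsWithin).exists
  ⟨ε, hε, hs⟩

lemma mem_vectorSpan_of_add_smul_mem {V : Type*} [AddCommGroup V] [Module ℝ V] {s : Set V}
    {x u : V} {ε : ℝ} (hε : ε ≠ 0) (hx : x ∈ s) (hxu : x + ε • u ∈ s) :
    u ∈ vectorSpan ℝ s := by
  simpa [hε] using (vectorSpan ℝ s).smul_mem ε⁻¹ (vsub_mem_vectorSpan ℝ hxu hx)

variable {ι κ : Type*} [Fintype ι]

lemma eventually_dotProduct_add_smul_lt {a x : ι → ℝ} {r : ℝ} (h : a ⬝ᵥ x < r) (u : ι → ℝ) :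
    ∀ᶠ ε in 𝓝 (0 : ℝ), a ⬝ᵥ (x + ε • u) < r := by
  have hcont : Continuous fun ε : ℝ => a ⬝ᵥ (x + ε • u) := by
    simp only [dotProduct_add, dotProduct_smul, smul_eq_mul]
    fun_prop
  exact (hcont.tendsto' 0 _ (by simp)).eventually_lt_const h

lemma eventually_dotProduct_add_smul_le {a x u : ι → ℝ} {r : ℝ} (h : a ⬝ᵥ x ≤ r)
    (hu : a ⬝ᵥ x = r → a ⬝ᵥ u ≤ 0) : ∀ᶠ ε in 𝓝[>] (0 : ℝ), a ⬝ᵥ (x + ε • u) ≤ r := by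
  rcases h.lt_or_eq with hlt | heq
  · exact nhdsWithin_le_nhds ((eventually_dotProduct_add_smul_lt hlt u).mono fun _ => le_of_lt)
  · filter_upwards [self_mem_nhdsWithin] with ε (hε : 0 < ε)
    simp only [dotProduct_add, dotProduct_smul, smul_eq_mul]
    nlinarith [hu heq]

lemma ne_zero_of_dotProduct_lt_of_eq {a x₀ x : ι → ℝ} {r : ℝ} (hlt : a ⬝ᵥ x₀ < r)
    (heq : a ⬝ᵥ x = r) : a ≠ 0 := by
  rintro rfl
  simp only [zero_dotProduct] at hlt heq
  linarith

lemma vectorSpan_le_ker {s : Set (ι → ℝ)} {a : ι → ℝ} {r : ℝ} (h : ∀ z ∈ s, a ⬝ᵥ z = r) :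
    vectorSpan ℝ s ≤ LinearMap.ker (dotProductEquiv ℝ ι a) := by
  rw [vectorSpan_def, Submodule.span_le]
  rintro _ ⟨y, hy, z, hz, rfl⟩
  simp [dotProduct_sub, h y hy, h z hz]

lemma finrank_ker_dotProductEquiv_add_one {a : ι → ℝ} (ha : a ≠ 0) :
    Module.finrank ℝ (LinearMap.ker (dotProductEquiv ℝ ι a)) + 1 = Fintype.card ι := by
  rw [Module.Dual.finrank_ker_add_one_of_ne_zero ((dotProductEquiv ℝ ι).map_ne_zero_iff.2 ha),
    Module.finrank_fintype_fun_eq_card]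

lemma affDim_of_nonempty {s : Set (ι → ℝ)} (hs : s.Nonempty) :
    affDim s = Module.finrank ℝ (vectorSpan ℝ s) := by
  rw [affDim, if_neg hs.ne_empty, direction_affineSpan]

def polyhedron (g : κ → ι → ℝ) (b : κ → ℝ) : Set (ι → ℝ) := {x | ∀ k, g k ⬝ᵥ x ≤ b k}

def Redundant (g : κ → ι → ℝ) (b : κ → ℝ) (k : κ) : Prop :=
  {x | ∀ t ≠ k, g t ⬝ᵥ x ≤ b t} = polyhedron g b

def constraintFace (g : κ → ι → ℝ) (b : κ → ℝ) (k : κ) : Set (ι → ℝ) :=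
  {x ∈ polyhedron g b | g k ⬝ᵥ x = b k}

variable {g : κ → ι → ℝ} {b : κ → ℝ} {x₀ : ι → ℝ}

lemma convex_polyhedron (g : κ → ι → ℝ) (b : κ → ℝ) : Convex ℝ (polyhedron g b) := by
  simp only [polyhedron, Set.ofPred_forall]
  exact convex_iInter fun k => convex_halfSpace_le (dotProductBilin ℝ ℝ (g k)).isLinear (b k)

lemma isClosed_polyhedron (g : κ → ι → ℝ) (b : κ → ℝ) : IsClosed (polyhedron g b) := by
  simp only [polyhedron, Set.ofPred_forall]
  exact isClosed_iInter fun k => isClosed_le (by fun_prop) continuous_const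

lemma isCompact_constraintFace (hbdd : Bornology.IsBounded (polyhedron g b)) (k : κ) :
    IsCompact (constraintFace g b k) :=
  Metric.isCompact_of_isClosed_isBounded
    ((isClosed_polyhedron g b).inter (isClosed_eq (by fun_prop) continuous_const))
    (hbdd.subset (Set.sep_subset _ _))

lemma mem_polyhedron_of_forall_lt (hx₀ : ∀ k, g k ⬝ᵥ x₀ < b k) :
    x₀ ∈ polyhedron g b :=
  fun k => (hx₀ k).le

lemma exists_mem_constraintFace_of_not_redundant (hx₀ : ∀ k, g k ⬝ᵥ x₀ < b k) {k : κ}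
    (hk : ¬ Redundant g b k) :
    ∃ w ∈ constraintFace g b k, ∀ t ≠ k, g t ⬝ᵥ w < b t := by
  obtain ⟨z, hz, hzk⟩ : ∃ z, (∀ t ≠ k, g t ⬝ᵥ z ≤ b t) ∧ b k < g k ⬝ᵥ z := by
    by_contra! h
    exact hk (Set.Subset.antisymm
      (fun z hz t => if ht : t = k then ht ▸ h z hz else hz t ht) fun z hz t _ => hz t)
  -- the point where the segment from `x₀` to `z` crosses the hyperplane of `k`
  set l := (b k - g k ⬝ᵥ x₀) / (g k ⬝ᵥ z - g k ⬝ᵥ x₀)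
  have hk₀ := hx₀ k
  have hl0 : 0 < l := div_pos (by linarith) (by linarith)
  have hl1 : l < 1 := (div_lt_one (by linarith)).2 (by linarith)
  have hdot : ∀ t, g t ⬝ᵥ (x₀ + l • (z - x₀)) = (1 - l) * g t ⬝ᵥ x₀ + l * g t ⬝ᵥ z := by
    intro t
    simp only [dotProduct_add, dotProduct_smul, dotProduct_sub, smul_eq_mul]
    ring
  have hlt : ∀ t ≠ k, g t ⬝ᵥ (x₀ + l • (z - x₀)) < b t := by
    intro t ht
    rw [hdot]
    nlinarith [hx₀ t, hz t ht]
  have heq : g k ⬝ᵥ (x₀ + l • (z - x₀)) = b k := by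
    rw [hdot, show ∀ p q : ℝ, (1 - l) * p + l * q = p + l * (q - p) by intros; ring,
      div_mul_cancel₀ _ (by linarith)]
    ring
  exact ⟨_, ⟨fun t => if ht : t = k then ht ▸ heq.le else (hlt t ht).le, heq⟩, hlt⟩

lemma eq_of_constraintFace_eq (hx₀ : ∀ k, g k ⬝ᵥ x₀ < b k) {k k' : κ} (hk : ¬ Redundant g b k)
    (h : constraintFace g b k = constraintFace g b k') : k = k' := by
  obtain ⟨w, hwF, hw⟩ := exists_mem_constraintFace_of_not_redundant hx₀ hk
  by_contra hne
  exact (hw k' (Ne.symm hne)).ne (h ▸ hwF).2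

variable [Fintype κ]

def tightSet (g : κ → ι → ℝ) (b : κ → ℝ) (x : ι → ℝ) : Finset κ :=
  Finset.univ.filter fun k => g k ⬝ᵥ x = b k

@[simp] lemma mem_tightSet {x : ι → ℝ} {k : κ} :
    k ∈ tightSet g b x ↔ g k ⬝ᵥ x = b k := by
  simp [tightSet]

lemma eventually_add_smul_mem_polyhedron {x u : ι → ℝ} (hx : x ∈ polyhedron g b)
    (hu : ∀ k, g k ⬝ᵥ x = b k → g k ⬝ᵥ u ≤ 0) :
    ∀ᶠ ε in 𝓝[>] (0 : ℝ), x + ε • u ∈ polyhedron g b :=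
  eventually_all.2 fun k => eventually_dotProduct_add_smul_le (hx k) (hu k)

lemma eventually_add_smul_mem_of_redundant {k : κ} (hk : Redundant g b k) {x u : ι → ℝ}
    (hx : x ∈ polyhedron g b) (hu : ∀ t ≠ k, g t ⬝ᵥ x = b t → g t ⬝ᵥ u ≤ 0) :
    ∀ᶠ ε in 𝓝[>] (0 : ℝ), x + ε • u ∈ polyhedron g b := by
  rw [← hk]
  refine eventually_all.2 fun t => ?_
  by_cases ht : t = k
  · exact .of_forall fun _ h => absurd ht h
  · exact (eventually_dotProduct_add_smul_le (hx t) (hu t ht)).mono fun _ h _ => h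

lemma affDim_polyhedron (hx₀ : ∀ k, g k ⬝ᵥ x₀ < b k) :
    affDim (polyhedron g b) = Fintype.card ι := by
  have hx₀P := mem_polyhedron_of_forall_lt hx₀
  have htop : vectorSpan ℝ (polyhedron g b) = ⊤ := by
    refine eq_top_iff.2 fun u _ => ?_
    obtain ⟨ε, hε, hmem⟩ := exists_pos_add_smul_mem
      (eventually_add_smul_mem_polyhedron (u := u) hx₀P fun k hk => absurd hk (hx₀ k).ne)
    exact mem_vectorSpan_of_add_smul_mem hε.ne' hx₀P hmem
  rw [affDim_of_nonempty ⟨x₀, hx₀P⟩, htop, finrank_top, Module.finrank_fintype_fun_eq_card]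

lemma IsFace.eq_polyhedron_of_forall_lt {F : Set (ι → ℝ)} (hF : IsFace (polyhedron g b) F)
    {z : ι → ℝ} (hz : z ∈ F) (hzs : ∀ k, g k ⬝ᵥ z < b k) : F = polyhedron g b := by
  obtain ⟨c, q, hvalid, rfl⟩ := hF
  obtain ⟨ε, hε, hmem⟩ := exists_pos_add_smul_mem
    (eventually_add_smul_mem_polyhedron (u := c) hz.1 fun k hk => absurd hk (hzs k).ne)
  have hc : c = 0 := by
    have h := hvalid _ hmem
    rw [dotProduct_add, hz.2, dotProduct_smul, smul_eq_mul] at h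
    exact dotProduct_self_eq_zero.1
      (le_antisymm (nonpos_of_mul_nonpos_right (by linarith) hε)
        (Finset.sum_nonneg fun i _ => mul_self_nonneg (c i)))
  subst hc
  have hq : q = 0 := by simpa using hz.2.symm
  ext
  simp [hq]

lemma exists_forall_lt_of_convex {C : Set (ι → ℝ)} (hC : Convex ℝ C) (hne : C.Nonempty)
    (hCP : C ⊆ polyhedron g b) (h : ∀ k, ∃ z ∈ C, g k ⬝ᵥ z < b k) :
    ∃ z ∈ C, ∀ k, g k ⬝ᵥ z < b k := by
  suffices ∀ s : Finset κ, ∃ z ∈ C, ∀ k ∈ s, g k ⬝ᵥ z < b k by simpa using this Finset.univ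
  intro s
  induction s using Finset.induction_on with
  | empty => exact hne.imp fun z hz => ⟨hz, by simp⟩
  | insert k s _ ih =>
    obtain ⟨z, hz, hzs⟩ := ih
    obtain ⟨w, hw, hwk⟩ := h k
    refine ⟨(1 / 2 : ℝ) • z + (1 / 2 : ℝ) • w, hC hz hw (by norm_num) (by norm_num) (by norm_num),
      fun t ht => ?_⟩
    simp only [dotProduct_add, dotProduct_smul, smul_eq_mul]
    rcases Finset.mem_insert.1 ht with rfl | ht
    · linarith [hCP hz t]
    · linarith [hzs t ht, hCP hw t]

lemma IsFacet.exists_forall_eq (hx₀ : ∀ k, g k ⬝ᵥ x₀ < b k) {F : Set (ι → ℝ)}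
    (hF : IsFacet (polyhedron g b) F) (hne : F.Nonempty) : ∃ k, ∀ z ∈ F, g k ⬝ᵥ z = b k := by
  by_contra! h
  obtain ⟨hface, hdim⟩ := hF
  obtain ⟨c, q, -, hFeq⟩ := id hface
  have hFP : F ⊆ polyhedron g b := hFeq ▸ Set.sep_subset _ _
  have hconv : Convex ℝ F :=
    hFeq ▸ (convex_polyhedron g b).inter (convex_hyperplane (dotProductBilin ℝ ℝ c).isLinear q)
  obtain ⟨z, hzF, hz⟩ := exists_forall_lt_of_convex hconv hne hFP fun k =>
    let ⟨z, hzF, hzk⟩ := h k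
    ⟨z, hzF, (hFP hzF k).lt_of_ne hzk⟩
  rw [hface.eq_polyhedron_of_forall_lt hzF hz, affDim_polyhedron hx₀] at hdim
  omega

lemma IsFacet.exists_eq_constraintFace (hx₀ : ∀ k, g k ⬝ᵥ x₀ < b k) {F : Set (ι → ℝ)}
    (hF : IsFacet (polyhedron g b) F) {x : ι → ℝ} (hx : x ∈ F) :
    ∃ k, F = constraintFace g b k := by
  obtain ⟨k, hk⟩ := hF.exists_forall_eq hx₀ ⟨x, hx⟩
  obtain ⟨⟨c, q, -, hFeq⟩, hdim⟩ := hF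
  have hFP : F ⊆ polyhedron g b := hFeq ▸ Set.sep_subset _ _
  have hFc : ∀ z ∈ F, c ⬝ᵥ z = q := hFeq ▸ fun z hz => hz.2
  have hgk := ne_zero_of_dotProduct_lt_of_eq (hx₀ k) (hk x hx)
  have hspan : vectorSpan ℝ F = LinearMap.ker (dotProductEquiv ℝ ι (g k)) := by
    refine Submodule.eq_of_le_of_finrank_eq (vectorSpan_le_ker hk) ?_
    have := finrank_ker_dotProductEquiv_add_one hgk
    rw [affDim_of_nonempty ⟨x, hx⟩] at hdim
    omega
  refine ⟨k, Set.Subset.antisymm (fun z hz => ⟨hFP hz, hk z hz⟩) fun z ⟨hzP, hzk⟩ => ?_⟩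
  have hzx : z -ᵥ x ∈ vectorSpan ℝ F := hspan ▸ by simp [dotProduct_sub, hzk, hk x hx]
  have hc := vectorSpan_le_ker hFc hzx
  simp only [LinearMap.mem_ker, dotProductEquiv_apply_apply, vsub_eq_sub, dotProduct_sub,
    hFc x hx, sub_eq_zero] at hc
  exact hFeq ▸ ⟨hzP, hc⟩

lemma isFacet_constraintFace (hx₀ : ∀ k, g k ⬝ᵥ x₀ < b k) {k : κ} (hk : ¬ Redundant g b k) :
    IsFacet (polyhedron g b) (constraintFace g b k) := by
  obtain ⟨w, hwF, hw⟩ := exists_mem_constraintFace_of_not_redundant hx₀ hk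
  have hgk := ne_zero_of_dotProduct_lt_of_eq (hx₀ k) hwF.2
  have hspan : vectorSpan ℝ (constraintFace g b k) = LinearMap.ker (dotProductEquiv ℝ ι (g k)) := by
    refine le_antisymm (vectorSpan_le_ker fun z hz => hz.2) fun u hu => ?_
    have hu : g k ⬝ᵥ u = 0 := by simpa using hu
    obtain ⟨ε, hε, hmem⟩ := exists_pos_add_smul_mem (eventually_add_smul_mem_polyhedron (u := u)
      hwF.1 fun t ht => by
        by_cases htk : t = k
        · rw [htk, hu]
        · exact absurd ht (hw t htk).ne)
    exact mem_vectorSpan_of_add_smul_mem hε.ne' hwF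
      ⟨hmem, by simp [dotProduct_add, hwF.2, hu]⟩
  refine ⟨⟨g k, b k, fun z hz => hz k, rfl⟩, ?_⟩
  have := finrank_ker_dotProductEquiv_add_one hgk
  rw [affDim_of_nonempty ⟨w, hwF⟩, hspan]
  omega

lemma card_le_card_erase_tightSet {k : κ} (hk : Redundant g b k) {v : ι → ℝ}
    (hv : v ∈ (constraintFace g b k).extremePoints ℝ) :
    Fintype.card ι ≤ ((tightSet g b v).erase k).card := by
  set T := (tightSet g b v).erase k
  let L : (ι → ℝ) →ₗ[ℝ] (T → ℝ) := (Matrix.of fun t : T => g t).mulVecLin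
  suffices Function.Injective L by
    simpa using LinearMap.finrank_le_finrank_of_injective this
  refine (injective_iff_map_eq_zero L).2 fun u hu => ?_
  have hTu : ∀ t ∈ T, g t ⬝ᵥ u = 0 := fun t ht => congrFun hu ⟨t, ht⟩
  have hvP := hv.1.1
  have hmove : ∀ w : ι → ℝ, (∀ t ∈ T, g t ⬝ᵥ w = 0) →
      ∀ᶠ ε in 𝓝[>] (0 : ℝ), v + ε • w ∈ polyhedron g b := fun w hw =>
    eventually_add_smul_mem_of_redundant hk hvP fun t htk ht =>
      (hw t (Finset.mem_erase.2 ⟨htk, mem_tightSet.2 ht⟩)).le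
  obtain ⟨ε, ⟨hplus, hminus⟩, hε : 0 < ε⟩ := (((hmove u hTu).and
    (hmove (-u) fun t ht => by simp [hTu t ht])).and self_mem_nhdsWithin).exists
  have hvk := hv.1.2
  have hku : g k ⬝ᵥ u = 0 := by
    have h₁ := hplus k
    have h₂ := hminus k
    simp only [dotProduct_add, dotProduct_smul, dotProduct_neg, smul_eq_mul, hvk] at h₁ h₂
    nlinarith
  have hplusF : v + ε • u ∈ constraintFace g b k := ⟨hplus, by simp [dotProduct_add, hvk, hku]⟩
  have hminusF : v + ε • -u ∈ constraintFace g b k := ⟨hminus, by simp [dotProduct_add, hvk, hku]⟩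
  have hseg : v ∈ openSegment ℝ (v + ε • -u) (v + ε • u) :=
    ⟨1 / 2, 1 / 2, by norm_num, by norm_num, by norm_num, by module⟩
  simpa [hε.ne'] using hv.2 hminusF hplusF hseg

lemma dotProduct_ne_of_redundant (hbdd : Bornology.IsBounded (polyhedron g b))
    (hcard : ∀ x ∈ polyhedron g b, (tightSet g b x).card ≤ Fintype.card ι) {k : κ}
    (hk : Redundant g b k) {x : ι → ℝ} (hx : x ∈ polyhedron g b) : g k ⬝ᵥ x ≠ b k := by
  intro hxk
  obtain ⟨v, hv⟩ := (isCompact_constraintFace hbdd k).extremePoints_nonempty ⟨x, hx, hxk⟩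
  have h₁ := card_le_card_erase_tightSet hk hv
  have h₂ := Finset.card_erase_add_one (mem_tightSet.2 hv.1.2)
  have h₃ := hcard v hv.1.1
  omega

lemma isSimple_polyhedron (hx₀ : ∀ k, g k ⬝ᵥ x₀ < b k)
    (hcard : ∀ x ∈ polyhedron g b, (tightSet g b x).card ≤ Fintype.card ι) :
    IsSimple (polyhedron g b) := by
  rintro x hx ⟨F, hFinj, hF⟩
  choose k hk using fun l => (hF l).1.exists_eq_constraintFace hx₀ (hF l).2
  have hkinj : Function.Injective k := fun l l' h => hFinj (by rw [hk l, hk l', h])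
  have hktight : ∀ l, k l ∈ tightSet g b x := fun l => mem_tightSet.2 (hk l ▸ (hF l).2).2
  have := Finset.card_le_card_of_injOn (s := .univ) k (fun l _ => hktight l) hkinj.injOn
  have := hcard x hx
  simp only [Finset.card_univ, Fintype.card_fin] at *
  omega

lemma card_tightSet_le_of_isSimple (hx₀ : ∀ k, g k ⬝ᵥ x₀ < b k)
    (hsimple : IsSimple (polyhedron g b))
    (hnb : ∀ k, Redundant g b k → ∀ x ∈ polyhedron g b, g k ⬝ᵥ x ≠ b k) :
    ∀ x ∈ polyhedron g b, (tightSet g b x).card ≤ Fintype.card ι := by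
  intro x hx
  by_contra! hlt
  have hnr : ∀ k ∈ tightSet g b x, ¬ Redundant g b k := fun k hk hred =>
    hnb k hred x hx (mem_tightSet.1 hk)
  let e : Fin (Fintype.card ι + 1) → κ := fun l => (tightSet g b x).equivFin.symm (Fin.castLE hlt l)
  have he : Function.Injective e :=
    Subtype.val_injective.comp ((Equiv.injective _).comp (Fin.castLE_injective _))
  have hemem : ∀ l, e l ∈ tightSet g b x := fun l => ((tightSet g b x).equivFin.symm _).2
  exact hsimple x hx ⟨fun l => constraintFace g b (e l),
    fun l l' h => he (eq_of_constraintFace_eq hx₀ (hnr _ (hemem l)) h),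
    fun l => ⟨isFacet_constraintFace hx₀ (hnr _ (hemem l)), hx, mem_tightSet.1 (hemem l)⟩⟩

theorem card_tightSet_le_iff (hbdd : Bornology.IsBounded (polyhedron g b))
    (hx₀ : ∀ k, g k ⬝ᵥ x₀ < b k) :
    (∀ x ∈ polyhedron g b, (tightSet g b x).card ≤ Fintype.card ι) ↔
      IsSimple (polyhedron g b) ∧
        ∀ k, Redundant g b k → ∀ x ∈ polyhedron g b, g k ⬝ᵥ x ≠ b k :=
  ⟨fun h => ⟨isSimple_polyhedron hx₀ h, fun _ hk _ => dotProduct_ne_of_redundant hbdd h hk⟩,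
    fun ⟨hs, hnb⟩ => card_tightSet_le_of_isSimple hx₀ hs hnb⟩

end Polyhedron

section BimatrixGame

lemma not_isBounded_of_smul_mem {E : Type*} [NormedAddCommGroup E] [NormedSpace ℝ E] {S : Set E}
    {x : E} (hx : x ≠ 0) (h : ∀ s : ℝ, 0 ≤ s → s • x ∈ S) : ¬ Bornology.IsBounded S := by
  intro hS
  obtain ⟨R, hR⟩ := isBounded_iff_forall_norm_le.1 hS
  have hxpos := norm_pos_iff.2 hx
  have h := hR _ (h ((|R| + 1) / ‖x‖) (by positivity))
  rw [norm_smul, Real.norm_of_nonneg (by positivity), div_mul_cancel₀ _ hxpos.ne'] at h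
  linarith [le_abs_self R]

variable {ι κ : Type*} [Fintype ι] [Fintype κ]

lemma card_filter_eq_zero_add_card_supp {x : ι → ℝ} (hx : ∀ i, 0 ≤ x i) :
    (Finset.univ.filter fun i => x i = 0).card + (supp x).card = Fintype.card ι := by
  have : supp x = Finset.univ.filter fun i => ¬ x i = 0 :=
    Finset.filter_congr fun i _ => (hx i).lt_iff_ne'
  rw [this, Finset.card_filter_add_card_filter_not, Finset.card_univ]

lemma supp_smul {c : ℝ} (hc : 0 < c) (x : ι → ℝ) : supp (c • x) = supp x := by
  simp [supp, mul_pos_iff_of_pos_left hc]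

lemma bestresp2_smul (B : Matrix ι κ ℝ) {c : ℝ} (hc : 0 < c) (x : ι → ℝ) :
    bestresp2 B (c • x) = bestresp2 B x := by
  simp [bestresp2, mulVec_smul, mul_le_mul_iff_of_pos_left hc]

lemma bestresp2_transpose (A : Matrix ι κ ℝ) (y : κ → ℝ) : bestresp2 Aᵀ y = bestresp1 A y := by
  simp [bestresp2, bestresp1]

lemma filter_eq_one_subset_bestresp2 {B : Matrix ι κ ℝ} {x : ι → ℝ}
    (hx : ∀ j, (Bᵀ *ᵥ x) j ≤ 1) :
    (Finset.univ.filter fun j => (Bᵀ *ᵥ x) j = 1) ⊆ bestresp2 B x := by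
  intro j hj
  simp only [Finset.mem_filter, Finset.mem_univ, true_and, bestresp2] at hj ⊢
  exact fun k => hj ▸ hx k

lemma bestresp2_subset_filter_eq_one {B : Matrix ι κ ℝ} {x : ι → ℝ}
    (hx : ∀ j, (Bᵀ *ᵥ x) j ≤ 1) {j₀ : κ} (hj₀ : (Bᵀ *ᵥ x) j₀ = 1) :
    bestresp2 B x ⊆ Finset.univ.filter fun j => (Bᵀ *ᵥ x) j = 1 := by
  intro j hj
  simp only [Finset.mem_filter, Finset.mem_univ, true_and, bestresp2] at hj ⊢
  exact le_antisymm (hx j) (hj₀ ▸ hj j₀)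

variable {m n : ℕ} (B : Matrix (Fin m) (Fin n) ℝ)

theorem forall_card_bestresp2_le_iff (hP : Bornology.IsBounded (Pset B)) :
    (∀ x, IsMixed x → (bestresp2 B x).card ≤ (supp x).card) ↔
      ∀ x ∈ Pset B, (Finset.univ.filter fun i => x i = 0).card +
        (Finset.univ.filter fun j => (Bᵀ *ᵥ x) j = 1).card ≤ m := by
  constructor
  · intro h x ⟨hx0, hx1⟩
    by_cases hx : x = 0
    · subst hx
      simp
    have hs : 0 < ∑ i, x i := (Finset.sum_nonneg fun i _ => hx0 i).lt_of_ne fun h =>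
      hx (funext fun i => (Finset.sum_eq_zero_iff_of_nonneg fun i _ => hx0 i).1 h.symm i
        (Finset.mem_univ i))
    have hmix : IsMixed ((∑ i, x i)⁻¹ • x) :=
      ⟨fun i => mul_nonneg (inv_nonneg.2 hs.le) (hx0 i), by simp [← Finset.mul_sum, hs.ne']⟩
    have h₁ := h _ hmix
    rw [bestresp2_smul B (inv_pos.2 hs), supp_smul (inv_pos.2 hs)] at h₁
    have h₂ := Finset.card_le_card (filter_eq_one_subset_bestresp2 hx1)
    have h₃ := card_filter_eq_zero_add_card_supp hx0
    rw [Fintype.card_fin] at h₃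
    omega
  · intro h x ⟨hx0, hx1⟩
    obtain hempty | ⟨j₀, hj₀⟩ := (bestresp2 B x).eq_empty_or_nonempty
    · simp [hempty]
    set v := (Bᵀ *ᵥ x) j₀
    have hmax : ∀ j, (Bᵀ *ᵥ x) j ≤ v := by simpa [bestresp2] using hj₀
    have hv : 0 < v := by
      -- otherwise the whole ray through `x` lies in the bounded set `P`
      by_contra! hv
      refine not_isBounded_of_smul_mem (S := Pset B) (x := x) ?_
        (fun s hs => ⟨fun i => ?_, fun j => ?_⟩) hP
      · rintro rfl
        simp at hx1
      · simpa using mul_nonneg hs (hx0 i)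
      · rw [mulVec_smul, Pi.smul_apply, smul_eq_mul]
        nlinarith [hmax j]
    have hxP : v⁻¹ • x ∈ Pset B := by
      refine ⟨fun i => mul_nonneg (inv_nonneg.2 hv.le) (hx0 i), fun j => ?_⟩
      rw [mulVec_smul, Pi.smul_apply, smul_eq_mul]
      exact (inv_mul_le_one₀ hv).2 (hmax j)
    have htight : (Bᵀ *ᵥ v⁻¹ • x) j₀ = 1 := by simp [mulVec_smul, hv.ne', v]
    have h₁ := h _ hxP
    have h₂ := Finset.card_le_card (bestresp2_subset_filter_eq_one hxP.2 htight)
    have h₃ := card_filter_eq_zero_add_card_supp hxP.1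
    rw [bestresp2_smul B (inv_pos.2 hv)] at h₂
    rw [supp_smul (inv_pos.2 hv), Fintype.card_fin] at h₃
    omega

def pConstraint : Fin m ⊕ Fin n → Fin m → ℝ := Sum.elim (fun i => -Pi.single i 1) fun j => Bᵀ j

def pBound : Fin m ⊕ Fin n → ℝ := Sum.elim 0 1

@[simp] lemma pConstraint_inl_dotProduct (i : Fin m) (x : Fin m → ℝ) :
    pConstraint B (.inl i) ⬝ᵥ x = -x i := by
  simp [pConstraint]

@[simp] lemma pConstraint_inr_dotProduct (j : Fin n) (x : Fin m → ℝ) :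
    pConstraint B (.inr j) ⬝ᵥ x = (Bᵀ *ᵥ x) j :=
  rfl

lemma polyhedron_pConstraint : polyhedron (pConstraint B) pBound = Pset B := by
  ext x
  simp [polyhedron, Pset, pBound, Sum.forall]

lemma card_tightSet_pConstraint (x : Fin m → ℝ) :
    (tightSet (pConstraint B) pBound x).card = (Finset.univ.filter fun i => x i = 0).card +
      (Finset.univ.filter fun j => (Bᵀ *ᵥ x) j = 1).card := by
  rw [tightSet, Finset.card_filter, Fintype.sum_sum_type, Finset.card_filter, Finset.card_filter]
  simp only [pConstraint_inl_dotProduct, pConstraint_inr_dotProduct, pBound, Sum.elim_inl,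
    Sum.elim_inr, Pi.zero_apply, Pi.one_apply, neg_eq_zero]
  -- the two sides differ only in their decidability instances
  congr

lemma exists_forall_pConstraint_lt : ∃ x₀, ∀ t, pConstraint B t ⬝ᵥ x₀ < pBound t := by
  have : ∀ᶠ ε in 𝓝[>] (0 : ℝ), ∀ t, pConstraint B t ⬝ᵥ (0 + ε • 1) < pBound t := by
    refine eventually_all.2 fun t => ?_
    cases t with
    | inl i =>
      filter_upwards [self_mem_nhdsWithin] with ε (hε : 0 < ε)
      simpa [pBound] using hε
    | inr j => exact nhdsWithin_le_nhds (eventually_dotProduct_add_smul_lt (by simp [pBound]) 1)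
  obtain ⟨ε, hε⟩ := this.exists
  exact ⟨_, hε⟩

theorem forall_card_bestresp2_le_iff_isSimple (hP : Bornology.IsBounded (Pset B)) :
    (∀ x, IsMixed x → (bestresp2 B x).card ≤ (supp x).card) ↔
      IsSimple (Pset B) ∧
      (∀ i : Fin m, {x : Fin m → ℝ | (∀ i', i' ≠ i → 0 ≤ x i') ∧ ∀ j, (Bᵀ *ᵥ x) j ≤ 1} = Pset B →
        ∀ x ∈ Pset B, x i ≠ 0) ∧
      (∀ j : Fin n, {x : Fin m → ℝ | (∀ i, 0 ≤ x i) ∧ ∀ j', j' ≠ j → (Bᵀ *ᵥ x) j' ≤ 1} = Pset B →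
        ∀ x ∈ Pset B, (Bᵀ *ᵥ x) j ≠ 1) := by
  obtain ⟨x₀, hx₀⟩ := exists_forall_pConstraint_lt B
  have key := card_tightSet_le_iff (polyhedron_pConstraint B ▸ hP) hx₀
  simp only [polyhedron_pConstraint, card_tightSet_pConstraint, Fintype.card_fin] at key
  rw [forall_card_bestresp2_le_iff B hP, key]
  simp only [Redundant, polyhedron_pConstraint]
  simp [Sum.forall, pBound]

end BimatrixGame

/-- Let `P` and `Q` be bounded.  Then `(A,B)` is nondegenerate iff (i) `P` and `Q`
are simple polytopes, and (ii) every redundant inequality among the defining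
inequalities of `P` (resp. of `Q`) is binding at no point of `P` (resp. `Q`). -/
theorem nondegenerate_iff_simple_and_redundant_never_binding {m n : ℕ}
    (A B : Matrix (Fin m) (Fin n) ℝ)
    (hP : Bornology.IsBounded (Pset B)) (hQ : Bornology.IsBounded (Qset A)) :
    Nondegenerate A B ↔
      (IsSimple (Pset B) ∧ IsSimple (Qset A) ∧
       (∀ i : Fin m,
          {x : Fin m → ℝ | (∀ i', i' ≠ i → 0 ≤ x i') ∧ ∀ j, (Bᵀ *ᵥ x) j ≤ 1} = Pset B →
          ∀ x ∈ Pset B, x i ≠ 0) ∧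
       (∀ j : Fin n,
          {x : Fin m → ℝ | (∀ i, 0 ≤ x i) ∧ ∀ j', j' ≠ j → (Bᵀ *ᵥ x) j' ≤ 1} = Pset B →
          ∀ x ∈ Pset B, (Bᵀ *ᵥ x) j ≠ 1) ∧
       (∀ i : Fin m,
          {y : Fin n → ℝ | (∀ i', i' ≠ i → (A *ᵥ y) i' ≤ 1) ∧ ∀ j, 0 ≤ y j} = Qset A →
          ∀ y ∈ Qset A, (A *ᵥ y) i ≠ 1) ∧
       (∀ j : Fin n,
          {y : Fin n → ℝ | (∀ i, (A *ᵥ y) i ≤ 1) ∧ ∀ j', j' ≠ j → 0 ≤ y j'} = Qset A →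
          ∀ y ∈ Qset A, y j ≠ 0)) := by
  have hQP : Pset Aᵀ = Qset A := Set.ext fun _ => and_comm
  have hA := forall_card_bestresp2_le_iff_isSimple Aᵀ (hQP ▸ hQ)
  simp only [bestresp2_transpose, transpose_transpose, hQP] at hA
  rw [_root_.Nondegenerate, forall_card_bestresp2_le_iff_isSimple B hP, hA]
  -- the sets describing `Q` differ from those obtained for `Pset Aᵀ` only in the order of conjuncts
  simp only [Set.ofPred_and, Set.inter_comm]
  tauto
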